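/- arXiv:1401.2973 — 2 statements merged into one kernel-verified Lean document; each statement's English description precedes it below -/
import Mathlib

section
/- Let G be a graph with a cycle double cover D, let G^+ be a weak non-conforming T-edge enlargement of G with vertices u, x, y as in the definition (x adjacent to y, u not confluent with the edge xy; G^+ is obtained from G by subdividing xy and joining u to the new vertex). If G minus the vertex set {u, x, y} is connected, then G^+ has a minor isomorphic to a type-1 enlargement (non-conforming jump), a type-3 enlargement (non-conforming split), or a type-9 enlargement (non-conforming T-edge) of G. -/
open SimpleGraph

universe u v

/-! ### Basic connectivity notions -/

/-- A graph is 3-connected: at least 4 vertices and deleting any ≤ 2 vertices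
leaves a connected graph. -/
def ThreeConnected {V : Type u} (G : SimpleGraph V) : Prop :=
  4 ≤ Nat.card V ∧
    ∀ s : Set V, s.ncard ≤ 2 → ((⊤ : G.Subgraph).deleteVerts s).coe.Connected

/-- A separation of `G`: `A ∪ B = V(G)` and no edge between `A \ B` and `B \ A`. -/
def Separation {V : Type u} (G : SimpleGraph V) (A B : Set V) : Prop :=
  A ∪ B = Set.univ ∧ ∀ a ∈ A \ B, ∀ b ∈ B \ A, ¬ G.Adj a b

/-- The edges of `G` induced by a vertex set `A`. -/
def inducedEdges {V : Type u} (G : SimpleGraph V) (A : Set V) : Set (Sym2 V) :=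
  {e ∈ G.edgeSet | ∀ x ∈ e, x ∈ A}

/-- Weakly 4-connected: 3-connected, at least 5 vertices, and every separation of order
at most three has a side inducing at most 4 edges. -/
def WeaklyFourConnected {V : Type u} (G : SimpleGraph V) : Prop :=
  ThreeConnected G ∧ 5 ≤ Nat.card V ∧
    ∀ A B : Set V, Separation G A B → (A ∩ B).ncard ≤ 3 →
      (inducedEdges G A).ncard ≤ 4 ∨ (inducedEdges G B).ncard ≤ 4

/-! ### Vertex splitting and expansions -/

/-- Valid data for splitting vertex `v`: `N1, N2` partition the neighborhood of `v`
with each part of size at least 2. -/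
def IsValidSplitData {V : Type u} (G : SimpleGraph V) (v : V) (N1 N2 : Set V) : Prop :=
  N1 ∪ N2 = G.neighborSet v ∧ Disjoint N1 N2 ∧ 2 ≤ N1.ncard ∧ 2 ≤ N2.ncard

/-- The graph obtained by splitting vertex `v` according to the partition `N1, N2`.
The vertex `some v` plays the role of `v₁` and `none` plays the role of `v₂`;
vertices `some a` for `a ≠ v` are the old vertices. -/
def splitGraph {V : Type u} (G : SimpleGraph V) (v : V) (N1 N2 : Set V) :
    SimpleGraph (Option V) :=
  SimpleGraph.fromRel (fun x y =>
    (∃ a b, x = some a ∧ y = some b ∧ a ≠ v ∧ b ≠ v ∧ G.Adj a b) ∨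
    (x = some v ∧ ∃ b ∈ N1, y = some b) ∨
    (x = none ∧ ∃ b ∈ N2, y = some b) ∨
    (x = none ∧ y = some v))

/-- `IsExpansion G G' π newE`: `G'` is obtained from `G` by repeatedly splitting
vertices of degree at least four; `π` maps each vertex of `G'` to the vertex of `G`
it arose from (so the branch-sets are the fibres of `π`) and `newE` is the set of
new edges created by the splits. -/
inductive IsExpansion {V : Type u} (G : SimpleGraph V) :
    {W : Type u} → SimpleGraph W → (W → V) → Set (Sym2 W) → Prop
  | refl : IsExpansion G G id ∅
  | step {W : Type u} {G' : SimpleGraph W} {π : W → V} {newE : Set (Sym2 W)}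
      (h : IsExpansion G G' π newE) (v : W) (N1 N2 : Set W)
      (hs : IsValidSplitData G' v N1 N2) :
      IsExpansion G (splitGraph G' v N1 N2) (fun w => π (w.getD v))
        (Sym2.map some '' newE ∪ {s(some v, none)})

/-! ### Minors -/

/-- `G` is isomorphic to a minor of `H`: there are disjoint nonempty connected
branch sets in `H`, one for each vertex of `G`, with edges of `G` realized by
edges of `H` between the corresponding branch sets. -/
def IsMinorOf {V : Type u} {W : Type v} (G : SimpleGraph V) (H : SimpleGraph W) : Prop :=
  ∃ f : V → Set W,
    (∀ a, (f a).Nonempty) ∧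
    (∀ a, (H.induce (f a)).Connected) ∧
    (∀ a b, a ≠ b → Disjoint (f a) (f b)) ∧
    (∀ a b, G.Adj a b → ∃ x ∈ f a, ∃ y ∈ f b, H.Adj x y)

/-! ### Cycles, segments, disk systems -/

/-- A subgraph is a cycle: nonempty, connected, and every vertex has exactly
two neighbours in it. -/
def IsCycleSub {V : Type u} {G : SimpleGraph V} (C : G.Subgraph) : Prop :=
  C.verts.Nonempty ∧ C.Connected ∧ ∀ w ∈ C.verts, (C.neighborSet w).ncard = 2

/-- A subgraph is a path: nonempty, connected, maximum degree at most two, and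
some vertex of degree at most one. -/
def IsPathSub {V : Type u} {G : SimpleGraph V} (P : G.Subgraph) : Prop :=
  P.verts.Nonempty ∧ P.Connected ∧ (∀ w ∈ P.verts, (P.neighborSet w).ncard ≤ 2) ∧
    ∃ w ∈ P.verts, (P.neighborSet w).ncard ≤ 1

/-- A segment of `G`: a maximal path (with at least one edge) all of whose internal
vertices have degree exactly two in `G`. -/
def IsSegment {V : Type u} (G : SimpleGraph V) (P : G.Subgraph) : Prop :=
  IsPathSub P ∧ P.edgeSet.Nonempty ∧
    (∀ w ∈ P.verts, (P.neighborSet w).ncard = 2 → (G.neighborSet w).ncard = 2) ∧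
    (∀ w ∈ P.verts, (P.neighborSet w).ncard ≤ 1 → (G.neighborSet w).ncard ≠ 2)

/-- Axiom (D1): a cycle double cover: a set of cycles such that every edge of `G`
lies on exactly two of them. -/
def IsCDC {V : Type u} (G : SimpleGraph V) (D : Set G.Subgraph) : Prop :=
  (∀ C ∈ D, IsCycleSub C) ∧ ∀ e ∈ G.edgeSet, {C ∈ D | e ∈ C.edgeSet}.ncard = 2

/-- Axiom (D2): at every vertex the incident edges admit a cyclic order in which
every pair of consecutive edges lies on exactly one common disk. -/
def AxiomD2 {V : Type u} (G : SimpleGraph V) (D : Set G.Subgraph) : Prop :=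
  ∀ w : V, ∃ σ : Equiv.Perm (G.neighborSet w),
    (∀ x y, σ.SameCycle x y) ∧
    ∀ u : G.neighborSet w,
      {C ∈ D | s(w, (u : V)) ∈ C.edgeSet ∧ s(w, ((σ u : G.neighborSet w) : V)) ∈ C.edgeSet}.ncard = 1

/-- Axiom (D3): any two distinct disks intersect in at most one vertex or in a segment. -/
def AxiomD3 {V : Type u} (G : SimpleGraph V) (D : Set G.Subgraph) : Prop :=
  ∀ C1 ∈ D, ∀ C2 ∈ D, C1 ≠ C2 → (C1 ⊓ C2).verts.Subsingleton ∨ IsSegment G (C1 ⊓ C2)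

/-- A weak disk system: a cycle double cover satisfying (D3). -/
def IsWeakDiskSystem {V : Type u} (G : SimpleGraph V) (D : Set G.Subgraph) : Prop :=
  IsCDC G D ∧ AxiomD3 G D

/-- A disk system: a cycle double cover satisfying (D2) and (D3). -/
def IsDiskSystem {V : Type u} (G : SimpleGraph V) (D : Set G.Subgraph) : Prop :=
  IsCDC G D ∧ AxiomD2 G D ∧ AxiomD3 G D

/-- Two vertices are confluent if a common disk contains both. -/
def ConfluentVV {V : Type u} {G : SimpleGraph V} (D : Set G.Subgraph) (x y : V) : Prop :=
  ∃ C ∈ D, x ∈ C.verts ∧ y ∈ C.verts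

/-- A vertex is confluent with an edge if a common disk contains both. -/
def ConfluentVE {V : Type u} {G : SimpleGraph V} (D : Set G.Subgraph) (x : V) (e : Sym2 V) : Prop :=
  ∃ C ∈ D, x ∈ C.verts ∧ e ∈ C.edgeSet

/-- Two edges are confluent if a common disk contains both. -/
def ConfluentEE {V : Type u} {G : SimpleGraph V} (D : Set G.Subgraph) (e f : Sym2 V) : Prop :=
  ∃ C ∈ D, e ∈ C.edgeSet ∧ f ∈ C.edgeSet

/-! ### Conforming splits -/

/-- The split of `v` along disks `D1, D2`: it is a valid split and, among the disks
through `v`, exactly `D1` and `D2` meet both `N1` and `N2`, and they intersect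
precisely in `v` (axioms (S1) and (S2)). -/
def SplitConformingWith {V : Type u} (G : SimpleGraph V) (D : Set G.Subgraph) (v : V)
    (N1 N2 : Set V) (D1 D2 : G.Subgraph) : Prop :=
  IsValidSplitData G v N1 N2 ∧ D1 ∈ D ∧ D2 ∈ D ∧ D1 ≠ D2 ∧
    {C ∈ D | v ∈ C.verts ∧ (C.verts ∩ N1).Nonempty ∧ (C.verts ∩ N2).Nonempty} = {D1, D2} ∧
    (D1 ⊓ D2).verts = {v}

/-- A conforming split (with respect to `D`). -/
def IsConformingSplit {V : Type u} (G : SimpleGraph V) (D : Set G.Subgraph) (v : V)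
    (N1 N2 : Set V) : Prop :=
  ∃ D1 D2, SplitConformingWith G D v N1 N2 D1 D2

/-- A conforming split along the disk `C`. -/
def IsConformingSplitAlong {V : Type u} (G : SimpleGraph V) (D : Set G.Subgraph) (v : V)
    (N1 N2 : Set V) (C : G.Subgraph) : Prop :=
  ∃ E, SplitConformingWith G D v N1 N2 C E ∨ SplitConformingWith G D v N1 N2 E C

/-- `C'` (a cycle of the split graph) lifts the cycle `C` of `G`: contracting the new
edge maps `C'` onto `C`. -/
def DiskLift {V : Type u} (G : SimpleGraph V) (v : V) {N1 N2 : Set V}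
    (C' : (splitGraph G v N1 N2).Subgraph) (C : G.Subgraph) : Prop :=
  C.verts = (fun w : Option V => w.getD v) '' C'.verts ∧
  C.edgeSet = Sym2.map (fun w : Option V => w.getD v) '' C'.edgeSet \ {s(v, v)}

/-- The disk system induced in the split graph: the cycles that lift disks of `D`. -/
def InducedDisks {V : Type u} (G : SimpleGraph V) (D : Set G.Subgraph) (v : V)
    (N1 N2 : Set V) : Set (splitGraph G v N1 N2).Subgraph :=
  {C' | IsCycleSub C' ∧ ∃ C ∈ D, DiskLift G v C' C}

/-- Conforming expansions, together with the induced disk system and the set of new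
edges. Each successive split is conforming with respect to the disk system induced
so far. -/
inductive IsConformingExpansion {V : Type u} (G : SimpleGraph V) (D : Set G.Subgraph) :
    {W : Type u} → (G' : SimpleGraph W) → Set G'.Subgraph → Set (Sym2 W) → Prop
  | refl : IsConformingExpansion G D G D ∅
  | step {W : Type u} {G' : SimpleGraph W} {D' : Set G'.Subgraph} {newE : Set (Sym2 W)}
      (h : IsConformingExpansion G D G' D' newE) (v : W) (N1 N2 : Set W)
      (hc : IsConformingSplit G' D' v N1 N2) :
      IsConformingExpansion G D (splitGraph G' v N1 N2) (InducedDisks G' D' v N1 N2)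
        (Sym2.map some '' newE ∪ {s(some v, none)})

/-- A non-conforming expansion: a conforming expansion followed by a non-conforming
split, followed by an arbitrary further expansion. -/
def IsNonConformingExpansion {V W : Type u} (G : SimpleGraph V) (D : Set G.Subgraph)
    (H : SimpleGraph W) : Prop :=
  ∃ (W₁ : Type u) (G₁ : SimpleGraph W₁) (D₁ : Set G₁.Subgraph) (newE₁ : Set (Sym2 W₁)),
    IsConformingExpansion G D G₁ D₁ newE₁ ∧
    ∃ (v : W₁) (N1 N2 : Set W₁), IsValidSplitData G₁ v N1 N2 ∧
      ¬ IsConformingSplit G₁ D₁ v N1 N2 ∧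
      ∃ (π : W → Option W₁) (newE : Set (Sym2 W)),
        IsExpansion (splitGraph G₁ v N1 N2) H π newE

/-! ### Building blocks for the enlargement operations -/

/-- Add the edge `uv` to `G`. -/
def addE {V : Type u} (G : SimpleGraph V) (x y : V) : SimpleGraph V :=
  G ⊔ SimpleGraph.fromEdgeSet {s(x, y)}

/-- Add a new vertex (`none`) adjacent exactly to the vertices of `S`. -/
def addVertexAdj {V : Type u} (G : SimpleGraph V) (S : Set V) : SimpleGraph (Option V) :=
  SimpleGraph.fromRel (fun x y =>
    (∃ a b, x = some a ∧ y = some b ∧ G.Adj a b) ∨ (x = none ∧ ∃ a ∈ S, y = some a))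

/-- Subdivide the edge `xy` (the new vertex is `none`) and join `u` to the new vertex. -/
def subdivideJoin {V : Type u} (G : SimpleGraph V) (x y u : V) : SimpleGraph (Option V) :=
  SimpleGraph.fromRel (fun a b =>
    (∃ p q, a = some p ∧ b = some q ∧ G.Adj p q ∧ s(p, q) ≠ s(x, y)) ∨
    (a = none ∧ (b = some x ∨ b = some y ∨ b = some u)))

/-- Subdivide the edges `ab` and `cd` (new vertices `some none` and `none`) and join
the two new vertices by an edge. -/
def doubleSubdivideJoin {V : Type u} (G : SimpleGraph V) (a b c d : V) :
    SimpleGraph (Option (Option V)) :=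
  SimpleGraph.fromRel (fun p q =>
    (∃ x y, p = some (some x) ∧ q = some (some y) ∧ G.Adj x y ∧
        s(x, y) ≠ s(a, b) ∧ s(x, y) ≠ s(c, d)) ∨
    (p = some none ∧ (q = some (some a) ∨ q = some (some b))) ∨
    (p = none ∧ (q = some (some c) ∨ q = some (some d) ∨ q = some none)))

/-- `a, b, c, d` occur on the cycle `C` in this cyclic order (in one of the two
orientations): `{a,c}` separates `b` from `d` on `C` and vice versa. -/
def CyclicOrderOn {V : Type u} {G : SimpleGraph V} (C : G.Subgraph) (a b c d : V) : Prop :=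
  a ∈ C.verts ∧ b ∈ C.verts ∧ c ∈ C.verts ∧ d ∈ C.verts ∧
  [a, b, c, d].Nodup ∧
  (∀ (hb : b ∈ (C.deleteVerts {a, c}).verts) (hd : d ∈ (C.deleteVerts {a, c}).verts),
    ¬ (C.deleteVerts {a, c}).coe.Reachable ⟨b, hb⟩ ⟨d, hd⟩) ∧
  (∀ (ha : a ∈ (C.deleteVerts {b, d}).verts) (hc : c ∈ (C.deleteVerts {b, d}).verts),
    ¬ (C.deleteVerts {b, d}).coe.Reachable ⟨a, ha⟩ ⟨c, hc⟩)

/-! ### The enlargement operations, phrased as "H has a minor isomorphic to a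
type-i enlargement of G with respect to D" -/

/-- Type 1 (non-conforming jump). -/
def HasType1Minor {V : Type u} {U : Type v} (G : SimpleGraph V) (D : Set G.Subgraph)
    (H : SimpleGraph U) : Prop :=
  ∃ x y : V, x ≠ y ∧ ¬ ConfluentVV D x y ∧ IsMinorOf (addE G x y) H

/-- Type 2 (cross). -/
def HasType2Minor {V : Type u} {U : Type v} (G : SimpleGraph V) (D : Set G.Subgraph)
    (H : SimpleGraph U) : Prop :=
  ∃ C ∈ D, ∃ a b c d : V, CyclicOrderOn C a b c d ∧
    IsMinorOf (addE (addE G a c) b d) H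

/-- Type 3 (non-conforming split). -/
def HasType3Minor {V : Type u} {U : Type v} (G : SimpleGraph V) (D : Set G.Subgraph)
    (H : SimpleGraph U) : Prop :=
  ∃ (w : V) (N1 N2 : Set V), IsValidSplitData G w N1 N2 ∧
    ¬ IsConformingSplit G D w N1 N2 ∧ IsMinorOf (splitGraph G w N1 N2) H

/-- Type 4 (split + non-conforming jump). In `splitGraph G v N1 N2` the vertices
`some v` and `none` play the roles of `v₁` and `v₂`. -/
def HasType4Minor {V : Type u} {U : Type v} (G : SimpleGraph V) (D : Set G.Subgraph)
    (H : SimpleGraph U) : Prop :=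
  ∃ C ∈ D, ∃ x w : V, x ∈ C.verts ∧ w ∈ C.verts ∧ ¬ G.Adj x w ∧ x ≠ w ∧
    ∃ N1 N2 : Set V, IsConformingSplit G D w N1 N2 ∧
      ¬ ConfluentVV (InducedDisks G D w N1 N2) (some x) none ∧
      IsMinorOf (addE (splitGraph G w N1 N2) (some x) none) H

/-- Type 5 (double split + non-conforming jump). -/
def HasType5Minor {V : Type u} {U : Type v} (G : SimpleGraph V) (D : Set G.Subgraph)
    (H : SimpleGraph U) : Prop :=
  ∃ x w : V, G.Adj x w ∧ ∃ C1 ∈ D, ∃ C2 ∈ D, C1 ≠ C2 ∧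
    s(x, w) ∈ C1.edgeSet ∧ s(x, w) ∈ C2.edgeSet ∧
    ∃ M1 M2 : Set V, IsConformingSplitAlong G D x M1 M2 C1 ∧ w ∈ M1 ∧
    ∃ C2' ∈ InducedDisks G D x M1 M2, DiskLift G x C2' C2 ∧
    ∃ P1 P2 : Set (Option V),
      IsConformingSplitAlong (splitGraph G x M1 M2) (InducedDisks G D x M1 M2)
        (some w) P1 P2 C2' ∧ (some x) ∈ P1 ∧
      IsMinorOf (addE (splitGraph (splitGraph G x M1 M2) (some w) P1 P2)
        (some none) none) H

/-- Type 6 (split + cross). -/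
def HasType6Minor {V : Type u} {U : Type v} (G : SimpleGraph V) (D : Set G.Subgraph)
    (H : SimpleGraph U) : Prop :=
  ∃ C ∈ D, ∃ x w z : V, x ∈ C.verts ∧ w ∈ C.verts ∧ z ∈ C.verts ∧
    ¬ G.Adj x w ∧ ¬ G.Adj x z ∧ w ≠ z ∧ x ≠ w ∧ x ≠ z ∧
    ∃ N1 N2 : Set V, IsConformingSplitAlong G D x N1 N2 C ∧
    ∃ C' ∈ InducedDisks G D x N1 N2, DiskLift G x C' C ∧
      CyclicOrderOn C' (some x) none (some w) (some z) ∧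
      IsMinorOf (addE (addE (splitGraph G x N1 N2) (some x) (some w)) none (some z)) H

/-- Type 7 (double split + cross). -/
def HasType7Minor {V : Type u} {U : Type v} (G : SimpleGraph V) (D : Set G.Subgraph)
    (H : SimpleGraph U) : Prop :=
  ∃ C ∈ D, ∃ x w : V, x ∈ C.verts ∧ w ∈ C.verts ∧ ¬ G.Adj x w ∧ x ≠ w ∧
    ∃ M1 M2 : Set V, IsConformingSplitAlong G D x M1 M2 C ∧
    ∃ C' ∈ InducedDisks G D x M1 M2, DiskLift G x C' C ∧
    ∃ P1 P2 : Set (Option V),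
      IsConformingSplitAlong (splitGraph G x M1 M2) (InducedDisks G D x M1 M2)
        (some w) P1 P2 C' ∧
    ∃ C'' ∈ InducedDisks (splitGraph G x M1 M2) (InducedDisks G D x M1 M2) (some w) P1 P2,
      DiskLift (splitGraph G x M1 M2) (some w) C'' C' ∧
      CyclicOrderOn C'' (some (some x)) (some none) (some (some w)) none ∧
      IsMinorOf (addE (addE (splitGraph (splitGraph G x M1 M2) (some w) P1 P2)
        (some (some x)) (some (some w))) (some none) none) H

/-- Weak type 8 (weak triad): add a vertex adjacent to three vertices not all on
a common disk. -/
def HasWeakType8Minor {V : Type u} {U : Type v} (G : SimpleGraph V) (D : Set G.Subgraph)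
    (H : SimpleGraph U) : Prop :=
  ∃ x1 x2 x3 : V, x1 ≠ x2 ∧ x1 ≠ x3 ∧ x2 ≠ x3 ∧
    (¬ ∃ C ∈ D, x1 ∈ C.verts ∧ x2 ∈ C.verts ∧ x3 ∈ C.verts) ∧
    IsMinorOf (addVertexAdj G {x1, x2, x3}) H

/-- Type 8 (non-separating triad). -/
def HasType8Minor {V : Type u} {U : Type v} (G : SimpleGraph V) (D : Set G.Subgraph)
    (H : SimpleGraph U) : Prop :=
  ∃ x1 x2 x3 : V, x1 ≠ x2 ∧ x1 ≠ x3 ∧ x2 ≠ x3 ∧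
    ConfluentVV D x1 x2 ∧ ConfluentVV D x1 x3 ∧ ConfluentVV D x2 x3 ∧
    (¬ ∃ C ∈ D, x1 ∈ C.verts ∧ x2 ∈ C.verts ∧ x3 ∈ C.verts) ∧
    ¬ G.Adj x1 x2 ∧ ¬ G.Adj x1 x3 ∧ ¬ G.Adj x2 x3 ∧
    ((⊤ : G.Subgraph).deleteVerts {x1, x2, x3}).coe.Connected ∧
    IsMinorOf (addVertexAdj G {x1, x2, x3}) H

/-- Weak type 9 (weak non-conforming T-edge). -/
def HasWeakType9Minor {V : Type u} {U : Type v} (G : SimpleGraph V) (D : Set G.Subgraph)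
    (H : SimpleGraph U) : Prop :=
  ∃ x y z : V, G.Adj x y ∧ ¬ ConfluentVE D z s(x, y) ∧
    IsMinorOf (subdivideJoin G x y z) H

/-- Type 9 (non-conforming T-edge). -/
def HasType9Minor {V : Type u} {U : Type v} (G : SimpleGraph V) (D : Set G.Subgraph)
    (H : SimpleGraph U) : Prop :=
  ∃ x y z : V, G.Adj x y ∧ ¬ ConfluentVE D z s(x, y) ∧
    ConfluentVV D z x ∧ ConfluentVV D z y ∧ ¬ G.Adj z x ∧ ¬ G.Adj z y ∧
    ((⊤ : G.Subgraph).deleteVerts {z, x, y}).coe.Connected ∧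
    IsMinorOf (subdivideJoin G x y z) H

/-! ### Prism, peripheral cycles, planarity -/

/-- The prism: the complement of a 6-cycle on six vertices. -/
def prismGraph : SimpleGraph (Fin 6) :=
  (SimpleGraph.fromRel (fun i j : Fin 6 => j = i + 1))ᶜ

def IsPrism {V : Type u} (G : SimpleGraph V) : Prop :=
  Nonempty (G ≃g prismGraph)

/-- A peripheral cycle: an induced cycle whose deletion leaves a connected graph. -/
def IsPeripheral {V : Type u} (G : SimpleGraph V) (C : G.Subgraph) : Prop :=
  IsCycleSub C ∧ C.IsInduced ∧ ((⊤ : G.Subgraph).deleteVerts C.verts).coe.Connected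

/-- The set of all peripheral cycles of `G`. -/
def peripheralDisks {V : Type u} (G : SimpleGraph V) : Set G.Subgraph :=
  {C | IsPeripheral G C}

/-- Planarity, encoded via Wagner's theorem: no `K₅` and no `K₃,₃` minor. -/
def IsPlanar {V : Type u} (G : SimpleGraph V) : Prop :=
  ¬ IsMinorOf (completeGraph (Fin 5)) G ∧
  ¬ IsMinorOf (completeBipartiteGraph (Fin 3) (Fin 3)) G

/-- Type 10 (the enlargement of a prism, i.e. `V₈`). -/
def HasType10Minor {V : Type u} {U : Type v} (G : SimpleGraph V) (H : SimpleGraph U) : Prop :=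
  IsPrism G ∧ ∃ a b c d : V, G.Adj a b ∧ G.Adj c d ∧ s(a, b) ≠ s(c, d) ∧
    (∃ t, G.Adj a t ∧ G.Adj b t) ∧ (∃ t, G.Adj c t ∧ G.Adj d t) ∧
    (¬ ∃ C : G.Subgraph, IsPeripheral G C ∧ s(a, b) ∈ C.edgeSet ∧ s(c, d) ∈ C.edgeSet) ∧
    IsMinorOf (doubleSubdivideJoin G a b c d) H

/-! ### Subdivisions -/

/-- Data witnessing that `S` is (isomorphic to) a subdivision of `Gb`:
an injection `f` of branch-vertices together with internally disjoint paths of `S`,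
one for each edge of `Gb`, covering `S`. -/
structure SubdivisionData {V : Type u} {W : Type v} (S : SimpleGraph V)
    (Gb : SimpleGraph W) where
  f : W → V
  path : ∀ a b : W, Gb.Adj a b → S.Walk (f a) (f b)
  inj : Function.Injective f
  isPath : ∀ a b hab, (path a b hab).IsPath
  symmSupport : ∀ a b (hab : Gb.Adj a b),
    (path b a hab.symm).support = (path a b hab).support.reverse
  interDisj : ∀ a b hab c d hcd, s(a, b) ≠ s(c, d) →
    ∀ x, x ∈ (path a b hab).support → x ∈ (path c d hcd).support → x ∈ Set.range f
  branchOnPath : ∀ a b hab (w : W), f w ∈ (path a b hab).support → w = a ∨ w = b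
  coverV : ∀ x : V, x ∈ Set.range f ∨ ∃ a b hab, x ∈ (path a b hab).support
  coverE : ∀ e ∈ S.edgeSet, ∃ a b hab, e ∈ (path a b hab).edges

/-- `G` is a subdivision of `Gb`. -/
def IsSubdivisionOf {V : Type u} {W : Type v} (S : SimpleGraph V) (Gb : SimpleGraph W) : Prop :=
  Nonempty (SubdivisionData S Gb)

/-- The cycle of the subdivision corresponding to a cycle `C` of the base graph
(the union of the paths replacing the edges of `C`). -/
def SubdivisionData.inducedDisk {V : Type u} {W : Type v} {S : SimpleGraph V}
    {Gb : SimpleGraph W} (sd : SubdivisionData S Gb) (C : Gb.Subgraph) : S.Subgraph where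
  verts := {x | ∃ (a b : W) (hC : C.Adj a b), x ∈ (sd.path a b (C.adj_sub hC)).support}
  Adj x y := ∃ (a b : W) (hC : C.Adj a b), s(x, y) ∈ (sd.path a b (C.adj_sub hC)).edges
  adj_sub := by
    rintro x y ⟨a, b, hC, he⟩
    exact (SimpleGraph.mem_edgeSet S).mp ((sd.path a b (C.adj_sub hC)).edges_subset_edgeSet he)
  edge_vert := by
    rintro x y ⟨a, b, hC, he⟩
    exact ⟨a, b, hC, SimpleGraph.Walk.fst_mem_support_of_mem_edges _ he⟩
  symm := by
    refine ⟨?_⟩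
    rintro x y ⟨a, b, hC, he⟩
    exact ⟨a, b, hC, by rwa [Sym2.eq_swap]⟩

/-- The weak disk system induced in the subdivision by a system of the base graph. -/
def SubdivisionData.inducedDisks {V : Type u} {W : Type v} {S : SimpleGraph V}
    {Gb : SimpleGraph W} (sd : SubdivisionData S Gb) (D : Set Gb.Subgraph) :
    Set S.Subgraph :=
  sd.inducedDisk '' D

/-! ### Bridges and locally planar extensions -/

/-- `B` is an `S`-bridge of `H`: either a single edge of `H` not in `S` with both ends
in `S`, or a component of `H − V(S)` together with all edges to `S`. -/
def IsBridgeOf {U : Type u} {H : SimpleGraph U} (S B : H.Subgraph) : Prop :=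
  (∃ x y : U, H.Adj x y ∧ s(x, y) ∉ S.edgeSet ∧ x ∈ S.verts ∧ y ∈ S.verts ∧
      B.verts = {x, y} ∧ ∀ p q, B.Adj p q ↔ s(p, q) = s(x, y)) ∨
  (∃ J : Set U, J.Nonempty ∧ J ∩ S.verts = ∅ ∧
    (∀ x ∈ J, ∀ y, H.Adj x y → y ∉ S.verts → y ∈ J) ∧ (H.induce J).Connected ∧
    B.verts = J ∪ {y ∈ S.verts | ∃ x ∈ J, H.Adj x y} ∧
    ∀ p q, B.Adj p q ↔ (H.Adj p q ∧ (p ∈ J ∨ q ∈ J)))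

/-- The induced system `D` (of cycles of `S.coe`) is locally planar in `H`:
every bridge attaches to a single disk, and for each disk the union of the disk
with its bridges has a planar drawing with the disk bounding the unbounded face
(encoded: adding an apex vertex joined to the disk keeps the graph planar). -/
def LocallyPlanar {U : Type u} (H : SimpleGraph U) (S : H.Subgraph)
    (D : Set S.coe.Subgraph) : Prop :=
  ∃ φ : H.Subgraph → S.coe.Subgraph,
    (∀ B, IsBridgeOf S B → φ B ∈ D ∧
      ∀ x ∈ B.verts ∩ S.verts, x ∈ Subtype.val '' (φ B).verts) ∧
    ∀ C ∈ D, IsPlanar (addVertexAdj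
      ((SimpleGraph.Subgraph.coeSubgraph C ⊔
        ⨆ B ∈ {B : H.Subgraph | IsBridgeOf S B ∧ φ B = C}, B).coe)
      {x | (x : U) ∈ Subtype.val '' C.verts})

/-- The disk system `D` of `G` has a locally planar extension into `H`. -/
def HasLocallyPlanarExtension {V U : Type u} (G : SimpleGraph V) (D : Set G.Subgraph)
    (H : SimpleGraph U) : Prop :=
  ∃ (W : Type u) (G' : SimpleGraph W) (D' : Set G'.Subgraph) (newE : Set (Sym2 W)),
    IsConformingExpansion G D G' D' newE ∧
    ∃ (S : H.Subgraph) (sd : SubdivisionData S.coe G'),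
      LocallyPlanar H S (sd.inducedDisks D')

/-! ### Degenerate separations -/

/-- A degenerate separation of order three. -/
def Degenerate {V : Type u} (G : SimpleGraph V) (A B : Set V) : Prop :=
  ((A \ B).ncard = 1 ∧ ∀ x ∈ A ∩ B, ∀ y ∈ A ∩ B, ¬ G.Adj x y) ∨
  (∃ v1 v2 v3 u1 u2 u3 : V, A ∩ B = {v1, v2, v3} ∧
    v1 ≠ v2 ∧ v1 ≠ v3 ∧ v2 ≠ v3 ∧
    u1 ∈ A ∧ u2 ∈ A ∧ u3 ∈ A ∧ G.Adj u1 u2 ∧ G.Adj u1 u3 ∧ G.Adj u2 u3 ∧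
    (u1 = v1 ∨ G.Adj u1 v1) ∧ (u2 = v2 ∨ G.Adj u2 v2) ∧ (u3 = v3 ∨ G.Adj u3 v3) ∧
    A ⊆ {u1, u2, u3, v1, v2, v3} ∧
    ∀ x ∈ A, ∀ y ∈ A, G.Adj x y →
      s(x, y) ∈ ({s(u1, v1), s(u2, v2), s(u3, v3),
                  s(u1, u2), s(u1, u3), s(u2, u3)} : Set (Sym2 V)))

/-! If `z` is adjacent to `x`, then `subdivideJoin G x y z` contains the split of `x` into
`{y, z}` and its other neighbours. No disk through `xy` meets `z`, so the two disks through `xy`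
and one through `xz` are three distinct disks crossing this split, which is therefore
non-conforming. The case of `z` adjacent to `y` is symmetric. Otherwise, contracting the
subdivision vertex into `x` or `y` gives `G + zx` or `G + zy`, a non-conforming jump unless `z`
is confluent with both `x` and `y`; and in that last case `subdivideJoin G x y z` is itself a
non-conforming T-edge. -/

namespace SimpleGraph

lemma connected_induce_singleton {W : Type v} (H : SimpleGraph W) (a : W) :
    (H.induce {a}).Connected :=
  (connected_iff _).2 ⟨Preconnected.of_subsingleton, inferInstance⟩

end SimpleGraph

lemma isMinorOf_of_injective {V : Type u} {W : Type v} {G : SimpleGraph V} {H : SimpleGraph W}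
    (f : G →g H) (hf : Function.Injective f) : IsMinorOf G H :=
  ⟨fun a => {f a}, fun _ => Set.singleton_nonempty _,
    fun a => H.connected_induce_singleton (f a),
    fun _ _ hab => Set.disjoint_singleton.2 (hf.ne hab),
    fun _ _ h => ⟨_, rfl, _, rfl, f.map_adj h⟩⟩

lemma isMinorOf_refl {V : Type u} (G : SimpleGraph V) : IsMinorOf G G :=
  isMinorOf_of_injective Hom.id Function.injective_id

lemma isMinorOf_of_fibres {V : Type u} {W : Type v} {G : SimpleGraph V} {H : SimpleGraph W}
    (π : W → V) (hconn : ∀ a, (H.induce (π ⁻¹' {a})).Connected)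
    (hadj : ∀ a b, G.Adj a b → ∃ p q, π p = a ∧ π q = b ∧ H.Adj p q) : IsMinorOf G H := by
  refine ⟨fun a => π ⁻¹' {a}, fun a => ?_, hconn, fun a b hab => ?_, fun a b h => ?_⟩
  · obtain ⟨⟨p, hp⟩⟩ := (hconn a).nonempty
    exact ⟨p, hp⟩
  · exact Set.disjoint_singleton.2 hab |>.preimage π
  · obtain ⟨p, q, rfl, rfl, hpq⟩ := hadj a b h
    exact ⟨p, rfl, q, rfl, hpq⟩

section subdivideJoin

variable {V : Type u} (G : SimpleGraph V) (x y z : V)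

lemma subdivideJoin_adj_some_some {a b : V} :
    (subdivideJoin G x y z).Adj (some a) (some b) ↔ G.Adj a b ∧ s(a, b) ≠ s(x, y) := by
  have hs : s(b, a) = s(a, b) := Sym2.eq_swap
  simp only [subdivideJoin, fromRel_adj, Option.some.injEq, reduceCtorEq, false_and, or_false,
    exists_and_left, exists_eq_left', hs]
  constructor
  · rintro ⟨-, h | h⟩
    exacts [h, ⟨h.1.symm, h.2⟩]
  · exact fun h => ⟨by simpa using h.1.ne, Or.inl h⟩

lemma subdivideJoin_adj_none {w : V} :
    (subdivideJoin G x y z).Adj none (some w) ↔ w = x ∨ w = y ∨ w = z := by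
  simp [subdivideJoin, fromRel_adj]

lemma subdivideJoin_comm : subdivideJoin G x y z = subdivideJoin G y x z := by
  have hs : s(y, x) = s(x, y) := Sym2.eq_swap
  ext a b
  simp only [subdivideJoin, fromRel_adj, hs, or_left_comm]

lemma addE_isMinorOf_subdivideJoin (hzx : z ≠ x) :
    IsMinorOf (addE G z x) (subdivideJoin G x y z) := by
  refine isMinorOf_of_fibres (fun w => w.getD x) (fun a => ?_) ?_
  · by_cases hax : a = x
    · have hfib : (fun w : Option V => w.getD x) ⁻¹' {a} = {none, some x} := by
        ext (_ | w) <;> simp [hax, eq_comm]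
      rw [hfib]
      exact induce_pair_connected_of_adj ((subdivideJoin_adj_none G x y z).2 (Or.inl rfl))
    · have hfib : (fun w : Option V => w.getD x) ⁻¹' {a} = {some a} := by
        ext (_ | w) <;> simp [Ne.symm hax]
      rw [hfib]
      exact connected_induce_singleton _ _
  · rintro a b (hab | ⟨hab, -⟩)
    · by_cases he : s(a, b) = s(x, y)
      · rcases Sym2.eq_iff.1 he with ⟨rfl, rfl⟩ | ⟨rfl, rfl⟩
        · exact ⟨none, some b, rfl, rfl, (subdivideJoin_adj_none ..).2 (by simp)⟩
        · exact ⟨some a, none, rfl, rfl, ((subdivideJoin_adj_none ..).2 (by simp)).symm⟩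
      · exact ⟨some a, some b, rfl, rfl, (subdivideJoin_adj_some_some G x y z).2 ⟨hab, he⟩⟩
    · rcases Sym2.eq_iff.1 hab with ⟨rfl, rfl⟩ | ⟨rfl, rfl⟩
      · exact ⟨some a, none, rfl, rfl, ((subdivideJoin_adj_none ..).2 (by simp)).symm⟩
      · exact ⟨none, some b, rfl, rfl, (subdivideJoin_adj_none ..).2 (by simp)⟩

/-- Exchanging `x` and the subdivision vertex maps the split of `x` into `{y, z}` and the remaining
neighbours onto `subdivideJoin G x y z` minus its edge `xz`. -/
lemma splitGraph_isMinorOf_subdivideJoin :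
    IsMinorOf (splitGraph G x {y, z} (G.neighborSet x \ {y, z})) (subdivideJoin G x y z) := by
  classical
  set σ := Equiv.swap (some x) (none : Option V)
  have hσ : ∀ {b}, b ≠ x → σ (some b) = some b := fun hb =>
    Equiv.swap_apply_of_ne_of_ne (by simpa using hb) (by simp)
  have hmap : ∀ p q, p ≠ q → (
      (∃ a b, p = some a ∧ q = some b ∧ a ≠ x ∧ b ≠ x ∧ G.Adj a b) ∨
      (p = some x ∧ ∃ b ∈ ({y, z} : Set V), q = some b) ∨
      (p = none ∧ ∃ b ∈ G.neighborSet x \ {y, z}, q = some b) ∨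
      (p = none ∧ q = some x)) → (subdivideJoin G x y z).Adj (σ p) (σ q) := by
    rintro p q hpq (⟨a, b, rfl, rfl, hax, hbx, hab⟩ | ⟨rfl, b, hb, rfl⟩ |
      ⟨rfl, b, ⟨hxb, hb⟩, rfl⟩ | ⟨rfl, rfl⟩)
    · rw [hσ hax, hσ hbx, subdivideJoin_adj_some_some]
      refine ⟨hab, fun he => ?_⟩
      rcases Sym2.eq_iff.1 he with ⟨h, -⟩ | ⟨-, h⟩
      exacts [hax h, hbx h]
    · have hbx : b ≠ x := fun h => hpq (by rw [h])
      rw [Equiv.swap_apply_left, hσ hbx, subdivideJoin_adj_none]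
      simpa using Or.inr hb
    · have hby : b ≠ y := fun h => hb (by simp [h])
      rw [Equiv.swap_apply_right, hσ (G.ne_of_adj hxb).symm, subdivideJoin_adj_some_some]
      exact ⟨hxb, fun he => hby (Sym2.congr_right.1 he)⟩
    · rw [Equiv.swap_apply_right, Equiv.swap_apply_left]
      exact ((subdivideJoin_adj_none G x y z).2 (Or.inl rfl)).symm
  refine isMinorOf_of_injective ⟨σ, fun {p q} h => ?_⟩ σ.injective
  obtain ⟨hpq, h | h⟩ := (fromRel_adj _ _ _).1 h
  exacts [hmap p q hpq h, (hmap q p hpq.symm h).symm]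

end subdivideJoin

section disks

variable {V : Type u} {G : SimpleGraph V} {D : Set G.Subgraph}

lemma IsCycleSub.exists_adj_ne {C : G.Subgraph} (hC : IsCycleSub C) {v w : V} (h : C.Adj v w) :
    ∃ a, C.Adj v a ∧ a ≠ w := by
  obtain ⟨p, q, hpq, hN⟩ := Set.ncard_eq_two.1 (hC.2.2 v (C.edge_vert h))
  by_cases hpw : p = w
  · exact ⟨q, show q ∈ C.neighborSet v by simp [hN], fun hqw => hpq (hpw.trans hqw.symm)⟩
  · exact ⟨p, show p ∈ C.neighborSet v by simp [hN], hpw⟩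

lemma IsCDC.exists_two_disks (hD : IsCDC G D) {v w : V} (h : G.Adj v w) :
    ∃ C₁ ∈ D, ∃ C₂ ∈ D, C₁ ≠ C₂ ∧ C₁.Adj v w ∧ C₂.Adj v w := by
  obtain ⟨C₁, C₂, h₁₂, hC⟩ := Set.ncard_eq_two.1 (hD.2 s(v, w) h)
  have h₁ : C₁ ∈ {C ∈ D | s(v, w) ∈ C.edgeSet} := hC ▸ Set.mem_insert C₁ {C₂}
  have h₂ : C₂ ∈ {C ∈ D | s(v, w) ∈ C.edgeSet} := hC ▸ Set.mem_insert_of_mem C₁ rfl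
  exact ⟨C₁, h₁.1, C₂, h₂.1, h₁₂, h₁.2, h₂.2⟩

lemma IsCDC.eq_or_eq_or_eq_of_adj (hD : IsCDC G D) {v w : V} {C₁ C₂ C₃ : G.Subgraph}
    (h₁ : C₁ ∈ D) (h₂ : C₂ ∈ D) (h₃ : C₃ ∈ D)
    (hC₁ : C₁.Adj v w) (hC₂ : C₂.Adj v w) (hC₃ : C₃.Adj v w) :
    C₁ = C₂ ∨ C₁ = C₃ ∨ C₂ = C₃ := by
  have htwo : {C ∈ D | s(v, w) ∈ C.edgeSet}.ncard = 2 := hD.2 s(v, w) (C₁.adj_sub hC₁)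
  by_contra! hne
  have hlt : 2 < {C ∈ D | s(v, w) ∈ C.edgeSet}.ncard :=
    (Set.two_lt_ncard_iff (Set.finite_of_ncard_ne_zero (htwo ▸ two_ne_zero))).2
      ⟨C₁, C₂, C₃, ⟨h₁, hC₁⟩, ⟨h₂, hC₂⟩, ⟨h₃, hC₃⟩, hne⟩
  omega

lemma IsCDC.ne_of_not_confluentVE (hD : IsCDC G D) {x y z : V} (hxy : G.Adj x y)
    (hnc : ¬ ConfluentVE D z s(x, y)) : z ≠ x ∧ z ≠ y := by
  obtain ⟨C, hC, -, -, -, hxyC, -⟩ := hD.exists_two_disks hxy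
  refine ⟨?_, ?_⟩ <;> rintro rfl
  exacts [hnc ⟨C, hC, C.edge_vert hxyC, hxyC⟩, hnc ⟨C, hC, C.edge_vert hxyC.symm, hxyC⟩]

def crossingDisks (D : Set G.Subgraph) (v : V) (N₁ N₂ : Set V) : Set G.Subgraph :=
  {C ∈ D | v ∈ C.verts ∧ (C.verts ∩ N₁).Nonempty ∧ (C.verts ∩ N₂).Nonempty}

lemma mem_crossingDisks_of_adj {C : G.Subgraph} (hC : C ∈ D) {v w₁ w₂ : V} {N₁ N₂ : Set V}
    (h₁ : C.Adj v w₁) (h₂ : C.Adj v w₂) (hw₁ : w₁ ∈ N₁) (hw₂ : w₂ ∈ N₂) :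
    C ∈ crossingDisks D v N₁ N₂ :=
  ⟨hC, C.edge_vert h₁, ⟨w₁, C.edge_vert h₁.symm, hw₁⟩, ⟨w₂, C.edge_vert h₂.symm, hw₂⟩⟩

lemma not_isConformingSplit_of_three_crossing {v : V} {N₁ N₂ : Set V} {C₁ C₂ C₃ : G.Subgraph}
    (h₁ : C₁ ∈ crossingDisks D v N₁ N₂) (h₂ : C₂ ∈ crossingDisks D v N₁ N₂)
    (h₃ : C₃ ∈ crossingDisks D v N₁ N₂) (h₁₂ : C₁ ≠ C₂) (h₁₃ : C₁ ≠ C₃) (h₂₃ : C₂ ≠ C₃) :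
    ¬ IsConformingSplit G D v N₁ N₂ := by
  rintro ⟨D₁, D₂, -, -, -, -, hcross, -⟩
  rw [← crossingDisks] at hcross
  rw [hcross] at h₁ h₂ h₃
  have := (Set.two_lt_ncard_iff).2 ⟨C₁, C₂, C₃, h₁, h₂, h₃, h₁₂, h₁₃, h₂₃⟩
  have := Set.ncard_insert_le D₁ {D₂}
  rw [Set.ncard_singleton] at this
  omega

end disks

section enlargements

variable {V : Type u} {G : SimpleGraph V} {D : Set G.Subgraph}

lemma hasType3Minor_subdivideJoin_of_adj [Finite V] (hD : IsCDC G D) {x y z : V} (hxy : G.Adj x y)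
    (hxz : G.Adj x z) (hnc : ¬ ConfluentVE D z s(x, y)) :
    HasType3Minor G D (subdivideJoin G x y z) := by
  set N₂ := G.neighborSet x \ {y, z}
  have hzy : z ≠ y := (hD.ne_of_not_confluentVE hxy hnc).2
  obtain ⟨E₁, hE₁, E₂, hE₂, hE₁₂, hxyE₁, hxyE₂⟩ := hD.exists_two_disks hxy
  obtain ⟨C, hC, -, -, -, hxzC, -⟩ := hD.exists_two_disks hxz
  obtain ⟨a₁, hxa₁, ha₁y⟩ := (hD.1 E₁ hE₁).exists_adj_ne hxyE₁
  obtain ⟨a₂, hxa₂, ha₂y⟩ := (hD.1 E₂ hE₂).exists_adj_ne hxyE₂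
  obtain ⟨b, hxb, hbz⟩ := (hD.1 C hC).exists_adj_ne hxzC
  have hzC : z ∈ C.verts := C.edge_vert hxzC.symm
  have hE₁C : E₁ ≠ C := by rintro rfl; exact hnc ⟨E₁, hE₁, hzC, hxyE₁⟩
  have hE₂C : E₂ ≠ C := by rintro rfl; exact hnc ⟨E₂, hE₂, hzC, hxyE₂⟩
  have ha₁ : a₁ ∈ N₂ := ⟨E₁.adj_sub hxa₁, by
    rintro (rfl | rfl | _)
    exacts [ha₁y rfl, hnc ⟨E₁, hE₁, E₁.edge_vert hxa₁.symm, hxyE₁⟩]⟩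
  have ha₂ : a₂ ∈ N₂ := ⟨E₂.adj_sub hxa₂, by
    rintro (rfl | rfl | _)
    exacts [ha₂y rfl, hnc ⟨E₂, hE₂, E₂.edge_vert hxa₂.symm, hxyE₂⟩]⟩
  have hb : b ∈ N₂ := ⟨C.adj_sub hxb, by
    rintro (rfl | rfl | _)
    exacts [hnc ⟨C, hC, hzC, hxb⟩, hbz rfl]⟩
  have hN₂ : 1 < N₂.ncard := by
    rw [Set.one_lt_ncard_iff]
    by_cases ha₁b : a₁ = b
    · refine ⟨a₁, a₂, ha₁, ha₂, fun ha₁₂ => ?_⟩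
      subst ha₁₂ ha₁b
      rcases hD.eq_or_eq_or_eq_of_adj hE₁ hE₂ hC hxa₁ hxa₂ hxb with h | h | h
      exacts [hE₁₂ h, hE₁C h, hE₂C h]
    · exact ⟨a₁, b, ha₁, hb, ha₁b⟩
  refine ⟨x, {y, z}, N₂, ⟨?_, disjoint_sdiff_self_right, (Set.ncard_pair hzy.symm).ge, hN₂⟩, ?_,
    splitGraph_isMinorOf_subdivideJoin G x y z⟩
  · exact Set.union_sdiff_cancel (Set.insert_subset hxy (Set.singleton_subset_iff.2 hxz))
  · exact not_isConformingSplit_of_three_crossing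
      (mem_crossingDisks_of_adj hE₁ hxyE₁ hxa₁ (by simp) ha₁)
      (mem_crossingDisks_of_adj hE₂ hxyE₂ hxa₂ (by simp) ha₂)
      (mem_crossingDisks_of_adj hC hxzC hxb (by simp) hb) hE₁₂ hE₁C hE₂C

end enlargements

/-- if `G − {u,x,y}` is connected, a weak non-conforming T-edge
enlargement has a minor isomorphic to a type-1, type-3 or type-9 enlargement. -/
theorem weak_tedge_upgrade {V : Type u} [Fintype V]
    (G : SimpleGraph V) (D : Set G.Subgraph) (hD : IsWeakDiskSystem G D)
    (x y z : V) (hxy : G.Adj x y) (hnc : ¬ ConfluentVE D z s(x, y))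
    (hconn : ((⊤ : G.Subgraph).deleteVerts {z, x, y}).coe.Connected) :
    HasType1Minor G D (subdivideJoin G x y z) ∨
    HasType3Minor G D (subdivideJoin G x y z) ∨
    HasType9Minor G D (subdivideJoin G x y z) := by
  have hCDC := hD.1
  have hnc' : ¬ ConfluentVE D z s(y, x) := by rwa [Sym2.eq_swap]
  obtain ⟨hzx, hzy⟩ := hCDC.ne_of_not_confluentVE hxy hnc
  by_cases hxz : G.Adj z x
  · exact .inr (.inl (hasType3Minor_subdivideJoin_of_adj hCDC hxy hxz.symm hnc))
  by_cases hyz : G.Adj z y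
  · rw [subdivideJoin_comm]
    exact .inr (.inl (hasType3Minor_subdivideJoin_of_adj hCDC hxy.symm hyz.symm hnc'))
  by_cases hcx : ConfluentVV D z x
  · by_cases hcy : ConfluentVV D z y
    · exact .inr (.inr ⟨x, y, z, hxy, hnc, hcx, hcy, hxz, hyz, hconn, isMinorOf_refl _⟩)
    · rw [subdivideJoin_comm]
      exact .inl ⟨z, y, hzy, hcy, addE_isMinorOf_subdivideJoin G y x z hzy⟩
  · exact .inl ⟨z, x, hzx, hcx, addE_isMinorOf_subdivideJoin G x y z hzx⟩
end

section
/- Let G1 be a graph isomorphic to a minor of a weakly 4-connected graph H, and let (P, Q, R) be a partition of V(G1) with P = {p1, p2}, Q = {q1, q2, q3}, |R| ≥ 2, such that G1 contains all six edges between P and Q, no edge with both ends in Q, and (P ∪ Q, Q ∪ R) is a (non-trivial) separation of G1 of order 3. Then H has a minor isomorphic to a graph obtained from G1 either by (1) adding an edge between some p_i and some r ∈ R, or (2) splitting some q_j into two vertices q_j^1 and q_j^2 (partitioning its neighborhood) such that q_j^1 is adjacent to p1 and q_j^2 is adjacent to p2. -/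
open SimpleGraph

universe u v

/-! Normalize the model of `G1` in `H` so that its branch sets cover `H`. An edge from the branch
set of some `pᵢ` to that of some `r ∈ R` yields the added edge `pᵢ r`; two distinct vertices of the
branch set of some `qⱼ`, adjacent to the branch sets of `p₁` and `p₂` respectively, let us split
`qⱼ`. Otherwise the branch set of each `qⱼ` meets the neighbourhood of `f p₁ ∪ f p₂` in a single
vertex `yⱼ`, adjacent to both, and `{y₁, y₂, y₃}` separates `f p₁ ∪ f p₂` from the rest of `H`.
This separation of order three has at least six edges on the side of the `pᵢ` (two at each `yⱼ`)
and at least five on the other side (at two vertices of degree at least three in the branch sets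
of two vertices of `R`), contradicting weak 4-connectivity. -/

namespace SimpleGraph

variable {W : Type*} {H : SimpleGraph W}

theorem Reachable.exists_adj_of_mem_of_notMem {u v : W} (h : H.Reachable u v) {S : Set W}
    (hu : u ∈ S) (hv : v ∉ S) : ∃ x ∈ S, ∃ y ∉ S, H.Adj x y := by
  obtain ⟨p⟩ := h
  obtain ⟨d, -, hd₁, hd₂⟩ := p.exists_boundary_dart S hu hv
  exact ⟨d.fst, hd₁, d.snd, hd₂, d.adj⟩

theorem induce_singleton_connected (w : W) : (H.induce {w}).Connected := by
  have : Nonempty ({w} : Set W) := ⟨⟨w, rfl⟩⟩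
  rw [induce_singleton_eq_top]
  exact connected_top

theorem induce_insert_connected {s : Set W} {x y : W} (hs : (H.induce s).Connected)
    (hx : x ∈ s) (hxy : H.Adj x y) : (H.induce (insert y s)).Connected := by
  rw [← Set.union_singleton]
  exact connected_induce_union hs.preconnected (induce_singleton_connected y).preconnected
    hx rfl hxy

theorem Walk.exists_support_subset_sdiff {Q Z : Set W} {u z : W} (p : H.Walk u z)
    (hp : ∀ x ∈ p.support, x ∈ Q) (hu : u ∉ Z)
    (hZ : ∀ x ∈ Z, ∀ y ∈ Q, H.Adj x y → y ∈ Z ∨ y = z) :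
    ∃ p' : H.Walk u z, ∀ x ∈ p'.support, x ∈ Q \ Z := by
  induction p with
  | nil => exact ⟨.nil, by simpa using ⟨hp _ (by simp), hu⟩⟩
  | @cons u v z huv p ih =>
    by_cases huz : u = z
    · subst huz
      exact ⟨.nil, by simpa using ⟨hp u (by simp), hu⟩⟩
    have hv : v ∉ Z := fun hv => (hZ v hv u (hp u (by simp)) huv.symm).elim hu huz
    obtain ⟨p', hp'⟩ := ih (fun x hx => hp x (by simp [hx])) hv hZ
    refine ⟨.cons huv p', ?_⟩
    simpa [hp u (by simp), hu] using hp'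

theorem induce_sdiff_connected {Q Z : Set W} {z : W} (hQ : (H.induce Q).Connected) (hz : z ∈ Q)
    (hzZ : z ∉ Z) (hZ : ∀ x ∈ Z, ∀ y ∈ Q, H.Adj x y → y ∈ Z ∨ y = z) :
    (H.induce (Q \ Z)).Connected := by
  rw [connected_iff_exists_forall_reachable]
  refine ⟨⟨z, hz, hzZ⟩, fun ⟨u, hu⟩ => ?_⟩
  obtain ⟨p⟩ := hQ.preconnected ⟨u, hu.1⟩ ⟨z, hz⟩
  have hpQ : ∀ x ∈ (p.map (Embedding.induce Q).toHom).support, x ∈ Q := by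
    simp only [Walk.support_map, List.mem_map]
    rintro _ ⟨x, -, rfl⟩
    exact x.2
  obtain ⟨p', hp'⟩ := (p.map (Embedding.induce Q).toHom).exists_support_subset_sdiff hpQ hu.2 hZ
  exact (p'.induce (Q \ Z) hp').reachable.symm

theorem exists_connected_partition [Finite W] {Q : Set W} (hQ : (H.induce Q).Connected)
    {z₁ z₂ : W} (hz₁ : z₁ ∈ Q) (hz₂ : z₂ ∈ Q) (hne : z₁ ≠ z₂) :
    ∃ Z₁ Z₂ : Set W, Z₁ ∪ Z₂ = Q ∧ Disjoint Z₁ Z₂ ∧ z₁ ∈ Z₁ ∧ z₂ ∈ Z₂ ∧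
      (H.induce Z₁).Connected ∧ (H.induce Z₂).Connected ∧ ∃ x ∈ Z₁, ∃ y ∈ Z₂, H.Adj x y := by
  obtain ⟨Z₁, ⟨hz₁Z, hZQ, hZconn⟩, hmax⟩ :=
    (Set.toFinite {Z : Set W | z₁ ∈ Z ∧ Z ⊆ Q \ {z₂} ∧ (H.induce Z).Connected}).exists_maximal
      ⟨{z₁}, rfl, by simpa using ⟨hz₁, hne⟩, induce_singleton_connected z₁⟩
  -- by maximality, `Z₁` absorbs every neighbour in `Q` other than `z₂`
  have hclosed : ∀ x ∈ Z₁, ∀ y ∈ Q, H.Adj x y → y ∈ Z₁ ∨ y = z₂ := by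
    refine fun x hx y hy hxy => or_iff_not_imp_right.2 fun hyz => ?_
    exact hmax ⟨Set.mem_insert_of_mem y hz₁Z, Set.insert_subset ⟨hy, hyz⟩ hZQ,
      induce_insert_connected hZconn hx hxy⟩ (Set.subset_insert y Z₁) (Set.mem_insert y Z₁)
  have hz₂Z : z₂ ∉ Z₁ := fun h => (hZQ h).2 rfl
  obtain ⟨x, hx, y, hy, hxy⟩ := (hQ.preconnected ⟨z₁, hz₁⟩ ⟨z₂, hz₂⟩).exists_adj_of_mem_of_notMem
    (S := Subtype.val ⁻¹' Z₁) hz₁Z hz₂Z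
  exact ⟨Z₁, Q \ Z₁, Set.union_sdiff_cancel fun w hw => (hZQ hw).1, Set.disjoint_sdiff_right,
    hz₁Z, ⟨hz₂, hz₂Z⟩, hZconn, induce_sdiff_connected hQ hz₂ hz₂Z hclosed,
    x, hx, y, ⟨y.2, hy⟩, hxy⟩

theorem ncard_incidenceSet (w : W) : (H.incidenceSet w).ncard = (H.neighborSet w).ncard := by
  classical
  rw [← Nat.card_coe_set_eq, ← Nat.card_coe_set_eq]
  exact Nat.card_congr (H.incidenceSetEquivNeighborSet w)

end SimpleGraph

variable {W : Type*} {H : SimpleGraph W}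

theorem ThreeConnected.connected (hH : ThreeConnected H) : H.Connected := by
  have h := hH.2 ∅ (by simp)
  rw [Subgraph.deleteVerts_empty] at h
  exact h.map (Subgraph.hom ⊤) fun w => ⟨⟨w, trivial⟩, rfl⟩

theorem ThreeConnected.three_le_ncard_neighborSet [Finite W] (hH : ThreeConnected H) (v : W) :
    3 ≤ (H.neighborSet v).ncard := by
  by_contra! hlt
  obtain ⟨u, -, hu⟩ := Set.exists_mem_notMem_of_ncard_lt_ncard (t := Set.univ)
    (s := insert v (H.neighborSet v)) (by
      have := Set.ncard_insert_le v (H.neighborSet v)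
      have := hH.1
      rw [Set.ncard_univ]; omega)
  rw [Set.mem_insert_iff, not_or] at hu
  -- after deleting the neighbours of `v`, no edge leaves `v`, yet `u` is still there
  let S := (⊤ : H.Subgraph).deleteVerts (H.neighborSet v)
  have hvS : v ∈ S.verts := ⟨trivial, H.irrefl⟩
  have huS : u ∈ S.verts := ⟨trivial, hu.2⟩
  obtain ⟨x, hx, y, hy, hxy⟩ := Reachable.exists_adj_of_mem_of_notMem
    ((hH.2 _ (by omega)).preconnected ⟨v, hvS⟩ ⟨u, huS⟩) (S := {⟨v, hvS⟩}) rfl (by simpa using hu.1)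
  rw [Set.mem_singleton_iff] at hx
  subst hx
  rw [Subgraph.coe_adj, Subgraph.deleteVerts_adj] at hxy
  exact hxy.2.2.2.1 hxy.2.2.2.2

theorem incidenceSet_subset_inducedEdges {B : Set W} {w : W}
    (h : insert w (H.neighborSet w) ⊆ B) : H.incidenceSet w ⊆ inducedEdges H B := by
  rintro e ⟨he, hwe⟩
  refine ⟨he, fun x hx => h ?_⟩
  obtain rfl | hxw := eq_or_ne x w
  · exact Set.mem_insert x _
  · exact Set.mem_insert_of_mem w (H.adj_of_mem_incidenceSet hxw.symm ⟨he, hwe⟩ ⟨he, hx⟩)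

theorem five_le_ncard_inducedEdges [Finite W] {B : Set W} {w₁ w₂ : W} (hne : w₁ ≠ w₂)
    (h₁ : insert w₁ (H.neighborSet w₁) ⊆ B) (h₂ : insert w₂ (H.neighborSet w₂) ⊆ B)
    (hd₁ : 3 ≤ (H.neighborSet w₁).ncard) (hd₂ : 3 ≤ (H.neighborSet w₂).ncard) :
    5 ≤ (inducedEdges H B).ncard := by
  have hinter : (H.incidenceSet w₁ ∩ H.incidenceSet w₂).ncard ≤ 1 :=
    (Set.ncard_le_ncard (H.incidenceSet_inter_incidenceSet_subset hne)).trans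
      (Set.ncard_singleton _).le
  have hunion := Set.ncard_le_ncard (Set.union_subset
    (incidenceSet_subset_inducedEdges h₁) (incidenceSet_subset_inducedEdges h₂))
  have := Set.ncard_union_add_ncard_inter (H.incidenceSet w₁) (H.incidenceSet w₂)
  rw [ncard_incidenceSet, ncard_incidenceSet] at this
  omega

open Finset in
theorem two_mul_card_le_ncard_inducedEdges [Finite W] {T₁ T₂ A : Set W} {Y : Finset W}
    (hT : Disjoint T₁ T₂) (hYT : ∀ y ∈ Y, y ∉ T₁ ∪ T₂) (hA : T₁ ∪ T₂ ∪ Y ⊆ A)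
    (h₁ : ∀ y ∈ Y, ∃ x ∈ T₁, H.Adj x y) (h₂ : ∀ y ∈ Y, ∃ x ∈ T₂, H.Adj x y) :
    2 * Y.card ≤ (inducedEdges H A).ncard := by
  classical
  obtain rfl | ⟨y₀, -⟩ := Y.eq_empty_or_nonempty
  · simp
  have : Nonempty W := ⟨y₀⟩
  choose! x₁ hx₁ hadj₁ using h₁
  choose! x₂ hx₂ hadj₂ using h₂
  have hinj : ∀ (x : W → W) (T : Set W), (∀ y ∈ Y, x y ∈ T) → (∀ y ∈ Y, y ∉ T) →
      Set.InjOn (fun y => s(x y, y)) Y := by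
    intro x T hx hY y hy y' hy' h
    rcases Sym2.eq_iff.1 h with ⟨-, h⟩ | ⟨h, -⟩
    · exact h
    · exact absurd (h ▸ hx y hy) (hY y' hy')
  set E₁ := Y.image fun y => s(x₁ y, y)
  set E₂ := Y.image fun y => s(x₂ y, y)
  have hE₁ : #E₁ = #Y := card_image_of_injOn (hinj x₁ T₁ hx₁ fun y hy h => hYT y hy (.inl h))
  have hE₂ : #E₂ = #Y := card_image_of_injOn (hinj x₂ T₂ hx₂ fun y hy h => hYT y hy (.inr h))
  have hdisj : Disjoint E₁ E₂ := by
    simp only [E₁, E₂, Finset.disjoint_left, mem_image]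
    rintro _ ⟨y, hy, rfl⟩ ⟨y', hy', h⟩
    rcases Sym2.eq_iff.1 h with ⟨h, -⟩ | ⟨h, -⟩
    · exact Set.disjoint_left.1 hT (hx₁ y hy) (h ▸ hx₂ y' hy')
    · exact hYT y hy (.inr (h ▸ hx₂ y' hy'))
  have hsub : ((E₁ ∪ E₂ : Finset (Sym2 W)) : Set (Sym2 W)) ⊆ inducedEdges H A := by
    simp only [E₁, E₂, coe_union, coe_image, Set.union_subset_iff, Set.image_subset_iff]
    refine ⟨fun y hy => ⟨hadj₁ y hy, ?_⟩, fun y hy => ⟨hadj₂ y hy, ?_⟩⟩ <;>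
      simp only [Sym2.mem_iff, forall_eq_or_imp, forall_eq] <;>
      exact ⟨hA (by simp [hx₁ y hy, hx₂ y hy]), hA (.inr hy)⟩
  have := Set.ncard_le_ncard hsub
  rw [Set.ncard_coe_finset, card_union_of_disjoint hdisj, hE₁, hE₂] at this
  omega

theorem WeaklyFourConnected.false_of_three_attachments [Finite W] (hH : WeaklyFourConnected H)
    {T₁ T₂ : Set W} (hT : Disjoint T₁ T₂) {Y : Finset W} (hY : Y.card = 3)
    (hYT : ∀ y ∈ Y, y ∉ T₁ ∪ T₂ ∧ (∃ x ∈ T₁, H.Adj x y) ∧ (∃ x ∈ T₂, H.Adj x y))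
    (hbdry : ∀ x ∈ T₁ ∪ T₂, ∀ u, H.Adj x u → u ∈ T₁ ∪ T₂ ∪ Y) {w₁ w₂ : W} (hw : w₁ ≠ w₂)
    (hw₁ : insert w₁ (H.neighborSet w₁) ⊆ (T₁ ∪ T₂)ᶜ)
    (hw₂ : insert w₂ (H.neighborSet w₂) ⊆ (T₁ ∪ T₂)ᶜ) : False := by
  have hsep : Separation H (T₁ ∪ T₂ ∪ Y) (T₁ ∪ T₂)ᶜ := by
    refine ⟨Set.eq_univ_of_forall fun x => ?_, fun x hx u hu hxu => hu.2 ?_⟩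
    · by_cases hx : x ∈ T₁ ∪ T₂
      exacts [.inl (.inl hx), .inr hx]
    · exact hbdry x (not_not.1 hx.2) u hxu
  have horder : ((T₁ ∪ T₂ ∪ Y) ∩ (T₁ ∪ T₂)ᶜ).ncard ≤ 3 := by
    refine (Set.ncard_le_ncard fun x hx => ?_).trans (Set.ncard_coe_finset Y ▸ hY.le)
    exact hx.1.resolve_left hx.2
  rcases hH.2.2 _ _ hsep horder with hA | hB
  · have := two_mul_card_le_ncard_inducedEdges hT (fun y hy => (hYT y hy).1) subset_rfl
      (fun y hy => (hYT y hy).2.1) (fun y hy => (hYT y hy).2.2)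
    omega
  · have := five_le_ncard_inducedEdges hw hw₁ hw₂ (hH.1.three_le_ncard_neighborSet w₁)
      (hH.1.three_le_ncard_neighborSet w₂)
    omega

variable {V : Type*} {G : SimpleGraph V} {f : V → Set W}

structure IsMinorModel (G : SimpleGraph V) (H : SimpleGraph W) (f : V → Set W) : Prop where
  nonempty : ∀ a, (f a).Nonempty
  connected : ∀ a, (H.induce (f a)).Connected
  disjoint : ∀ a b, a ≠ b → Disjoint (f a) (f b)
  adj : ∀ a b, G.Adj a b → ∃ x ∈ f a, ∃ y ∈ f b, H.Adj x y

theorem isMinorOf_iff_exists_isMinorModel : IsMinorOf G H ↔ ∃ f, IsMinorModel G H f :=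
  ⟨fun ⟨f, h₁, h₂, h₃, h₄⟩ => ⟨f, h₁, h₂, h₃, h₄⟩, fun ⟨f, h⟩ => ⟨f, h.1, h.2, h.3, h.4⟩⟩

theorem subset_update_insert [DecidableEq V] (f : V → Set W) (a : V) (y : W) (b : V) :
    f b ⊆ Function.update f a (insert y (f a)) b := by
  obtain rfl | hb := eq_or_ne b a
  · rw [Function.update_self]; exact Set.subset_insert y (f b)
  · rw [Function.update_of_ne hb]

def splitBranchSets [DecidableEq V] (f : V → Set W) (v : V) (Z₁ Z₂ : Set W) :
    Option V → Set W :=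
  fun o => o.elim Z₂ (Function.update f v Z₁)

section splitBranchSets

variable [DecidableEq V] {v : V} {Z₁ Z₂ : Set W}

@[simp] theorem splitBranchSets_none : splitBranchSets f v Z₁ Z₂ none = Z₂ := rfl

@[simp] theorem splitBranchSets_some_self : splitBranchSets f v Z₁ Z₂ (some v) = Z₁ :=
  Function.update_self ..

theorem splitBranchSets_some_of_ne {a : V} (ha : a ≠ v) :
    splitBranchSets f v Z₁ Z₂ (some a) = f a :=
  Function.update_of_ne ha _ _

theorem splitBranchSets_subset (hZ : Z₁ ∪ Z₂ = f v) (o : Option V) :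
    splitBranchSets f v Z₁ Z₂ o ⊆ f (o.getD v) := by
  rcases o with _ | a
  · exact hZ ▸ Set.subset_union_right
  obtain rfl | ha := eq_or_ne a v
  · exact splitBranchSets_some_self (f := f) ▸ hZ ▸ Set.subset_union_left
  · exact (splitBranchSets_some_of_ne ha).subset

end splitBranchSets

namespace IsMinorModel

theorem isMinorOf (hf : IsMinorModel G H f) : IsMinorOf G H :=
  isMinorOf_iff_exists_isMinorModel.2 ⟨f, hf⟩

theorem eq_of_mem (hf : IsMinorModel G H f) {a b : V} {x : W} (ha : x ∈ f a) (hb : x ∈ f b) :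
    a = b :=
  by_contra fun h => (hf.disjoint a b h).ne_of_mem ha hb rfl

theorem update_insert [DecidableEq V] (hf : IsMinorModel G H f) {a : V} {x y : W} (hx : x ∈ f a)
    (hxy : H.Adj x y) (hy : ∀ b, y ∉ f b) :
    IsMinorModel G H (Function.update f a (insert y (f a))) := by
  have hle := subset_update_insert f a y
  refine ⟨fun b => (hf.nonempty b).mono (hle b), fun b => ?_, fun b c hbc => ?_,
    fun b c hbc => ?_⟩
  · obtain rfl | hb := eq_or_ne b a
    · rw [Function.update_self]; exact induce_insert_connected (hf.connected b) hx hxy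
    · rw [Function.update_of_ne hb]; exact hf.connected b
  · obtain rfl | hb := eq_or_ne b a
    · simpa [hbc.symm] using ⟨hy c, hf.disjoint b c hbc⟩
    obtain rfl | hc := eq_or_ne c a
    · simpa [hbc] using ⟨hy b, hf.disjoint b c hbc⟩
    · simpa [hb, hc] using hf.disjoint b c hbc
  · obtain ⟨u, hu, v, hv, huv⟩ := hf.adj b c hbc
    exact ⟨u, hle b hu, v, hle c hv, huv⟩

theorem exists_spanning [Finite W] [Nonempty V] (hH : H.Connected) (hf : IsMinorModel G H f) :
    ∃ g, IsMinorModel G H g ∧ ∀ x, ∃ a, x ∈ g a := by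
  classical
  obtain ⟨_, ⟨g, hg, rfl⟩, hmax⟩ := (Set.toFinite
    {S : Set W | ∃ g, IsMinorModel G H g ∧ S = ⋃ a, g a}).exists_maximal ⟨_, f, hf, rfl⟩
  refine ⟨g, hg, fun y => ?_⟩
  by_contra! hy
  obtain ⟨a⟩ := ‹Nonempty V›
  obtain ⟨x₀, hx₀⟩ := hg.nonempty a
  obtain ⟨x, hx, y', hy', hxy⟩ := (hH.preconnected x₀ y).exists_adj_of_mem_of_notMem
    (Set.mem_iUnion_of_mem a hx₀) (by simpa using hy)
  obtain ⟨b, hxb⟩ := Set.mem_iUnion.1 hx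
  have hy'' : ∀ c, y' ∉ g c := by simpa using hy'
  exact hy' (hmax ⟨_, hg.update_insert hxb hxy hy'', rfl⟩
    (Set.iUnion_mono (subset_update_insert g b y')) (Set.mem_iUnion_of_mem b (by simp)))

theorem addE (hf : IsMinorModel G H f) {a b : V} {x y : W} (hx : x ∈ f a) (hy : y ∈ f b)
    (hxy : H.Adj x y) : IsMinorModel (addE G a b) H f := by
  refine ⟨hf.nonempty, hf.connected, hf.disjoint, fun c d hcd => ?_⟩
  simp only [_root_.addE, sup_adj, fromEdgeSet_adj, Set.mem_singleton_iff] at hcd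
  rcases hcd with hcd | ⟨hcd, -⟩
  · exact hf.adj c d hcd
  · rcases Sym2.eq_iff.1 hcd with ⟨rfl, rfl⟩ | ⟨rfl, rfl⟩
    exacts [⟨x, hx, y, hy, hxy⟩, ⟨y, hy, x, hx, hxy.symm⟩]

section split

variable [DecidableEq V] {v : V} {Z₁ Z₂ : Set W} {N₁ N₂ : Set V}

theorem exists_adj_splitBranchSets (hf : IsMinorModel G H f) (hcross : ∃ x ∈ Z₁, ∃ y ∈ Z₂, H.Adj x y)
    (hN₁ : ∀ a ∈ N₁, ∃ x ∈ f a, ∃ y ∈ Z₁, H.Adj x y)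
    (hN₂ : ∀ a ∈ N₂, ∃ x ∈ f a, ∃ y ∈ Z₂, H.Adj x y) {o o' : Option V} (hne : o ≠ o')
    (h : (∃ a b, o = some a ∧ o' = some b ∧ a ≠ v ∧ b ≠ v ∧ G.Adj a b) ∨
      (o = some v ∧ ∃ b ∈ N₁, o' = some b) ∨ (o = none ∧ ∃ b ∈ N₂, o' = some b) ∨
      (o = none ∧ o' = some v)) :
    ∃ x ∈ splitBranchSets f v Z₁ Z₂ o, ∃ y ∈ splitBranchSets f v Z₁ Z₂ o', H.Adj x y := by
  obtain ⟨x, hx, y, hy, hxy⟩ := hcross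
  rcases h with ⟨a, b, rfl, rfl, ha, hb, hab⟩ | ⟨rfl, b, hb, rfl⟩ | ⟨rfl, b, hb, rfl⟩ | ⟨rfl, rfl⟩
  · rw [splitBranchSets_some_of_ne ha, splitBranchSets_some_of_ne hb]
    exact hf.adj a b hab
  · rw [splitBranchSets_some_self, splitBranchSets_some_of_ne fun h => hne (by rw [h])]
    obtain ⟨u, hu, w, hw, huw⟩ := hN₁ b hb
    exact ⟨w, hw, u, hu, huw.symm⟩
  · obtain rfl | hbv := eq_or_ne b v
    · simpa using ⟨y, hy, x, hx, hxy.symm⟩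
    rw [splitBranchSets_none, splitBranchSets_some_of_ne hbv]
    obtain ⟨u, hu, w, hw, huw⟩ := hN₂ b hb
    exact ⟨w, hw, u, hu, huw.symm⟩
  · simpa using ⟨y, hy, x, hx, hxy.symm⟩

theorem split (hf : IsMinorModel G H f) (hZ : Z₁ ∪ Z₂ = f v) (hZd : Disjoint Z₁ Z₂)
    (hZ₁ : (H.induce Z₁).Connected) (hZ₂ : (H.induce Z₂).Connected)
    (hcross : ∃ x ∈ Z₁, ∃ y ∈ Z₂, H.Adj x y) (hN₁ : ∀ a ∈ N₁, ∃ x ∈ f a, ∃ y ∈ Z₁, H.Adj x y)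
    (hN₂ : ∀ a ∈ N₂, ∃ x ∈ f a, ∃ y ∈ Z₂, H.Adj x y) :
    IsMinorModel (splitGraph G v N₁ N₂) H (splitBranchSets f v Z₁ Z₂) := by
  refine ⟨fun o => ?_, fun o => ?_, fun o o' hoo' => ?_, fun o o' h => ?_⟩
  · rcases o with _ | a
    · obtain ⟨-, -, y, hy, -⟩ := hcross
      exact ⟨y, hy⟩
    obtain rfl | ha := eq_or_ne a v
    · obtain ⟨x, hx, -⟩ := hcross
      exact ⟨x, by simpa using hx⟩
    · exact splitBranchSets_some_of_ne ha ▸ hf.nonempty a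
  · rcases o with _ | a
    · exact hZ₂
    obtain rfl | ha := eq_or_ne a v
    · rw [splitBranchSets_some_self]; exact hZ₁
    · exact splitBranchSets_some_of_ne ha ▸ hf.connected a
  · by_cases h : o.getD v = o'.getD v
    · rcases o with _ | a <;> rcases o' with _ | b
      · exact absurd rfl hoo'
      · obtain rfl : b = v := h.symm
        simpa using hZd.symm
      · obtain rfl : a = v := h
        simpa using hZd
      · exact absurd (congrArg some h) hoo'
    · exact (hf.disjoint _ _ h).mono (splitBranchSets_subset hZ o) (splitBranchSets_subset hZ o')
  · rw [splitGraph, fromRel_adj] at h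
    obtain ⟨hne, h | h⟩ := h
    · exact hf.exists_adj_splitBranchSets hcross hN₁ hN₂ hne h
    · obtain ⟨u, hu, w, hw, huw⟩ := hf.exists_adj_splitBranchSets hcross hN₁ hN₂ hne.symm h
      exact ⟨w, hw, u, hu, huw.symm⟩

end split

theorem exists_split [Finite W] (hf : IsMinorModel G H f) {v a₁ a₂ : V} (ha₁ : G.Adj v a₁)
    (ha₂ : G.Adj v a₂) (ha : a₁ ≠ a₂) {z₁ z₂ : W} (hz₁ : z₁ ∈ f v) (hz₂ : z₂ ∈ f v)
    (hz : z₁ ≠ z₂) (h₁ : ∃ x ∈ f a₁, H.Adj x z₁) (h₂ : ∃ x ∈ f a₂, H.Adj x z₂) :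
    ∃ N₁ N₂ : Set V, N₁ ∪ N₂ = G.neighborSet v ∧ Disjoint N₁ N₂ ∧ a₁ ∈ N₁ ∧ a₂ ∈ N₂ ∧
      IsMinorOf (splitGraph G v N₁ N₂) H := by
  classical
  obtain ⟨Z₁, Z₂, hZ, hZd, hz₁Z, hz₂Z, hZ₁, hZ₂, hcross⟩ :=
    exists_connected_partition (hf.connected v) hz₁ hz₂ hz
  set N₁ := {a ∈ G.neighborSet v | a ≠ a₂ ∧ (a = a₁ ∨ ∃ x ∈ f a, ∃ y ∈ Z₁, H.Adj x y)}
  have ha₁N : a₁ ∈ N₁ := ⟨ha₁, ha, .inl rfl⟩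
  have ha₂N : a₂ ∉ N₁ := fun h => h.2.1 rfl
  refine ⟨N₁, G.neighborSet v \ N₁, Set.union_sdiff_cancel fun a ha => ha.1,
    Set.disjoint_sdiff_right, ha₁N, ⟨ha₂, ha₂N⟩, (hf.split hZ hZd hZ₁ hZ₂ hcross ?_ ?_).isMinorOf⟩
  · rintro a ⟨-, -, rfl | h⟩
    · obtain ⟨x, hx, hxz⟩ := h₁
      exact ⟨x, hx, z₁, hz₁Z, hxz⟩
    · exact h
  · rintro a ⟨hva, haN⟩
    obtain rfl | ha₂' := eq_or_ne a a₂
    · obtain ⟨x, hx, hxz⟩ := h₂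
      exact ⟨x, hx, z₂, hz₂Z, hxz⟩
    -- the edge `v a` of `G` must reach `f a` from `Z₂`, since `a ∉ N₁`
    obtain ⟨y, hy, x, hx, hyx⟩ := hf.adj v a hva
    have hyZ : y ∈ Z₁ ∪ Z₂ := hZ ▸ hy
    exact ⟨x, hx, y, hyZ.resolve_left fun hyZ => haN ⟨hva, ha₂', .inr ⟨x, hx, y, hyZ, hyx.symm⟩⟩,
      hyx.symm⟩

theorem exists_unique_attachment (hf : IsMinorModel G H f) {p₁ p₂ q : V} (h₁ : G.Adj p₁ q)
    (h₂ : G.Adj p₂ q) (hq : ∀ z₁ ∈ f q, ∀ z₂ ∈ f q, (∃ x ∈ f p₁, H.Adj x z₁) →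
      (∃ x ∈ f p₂, H.Adj x z₂) → z₁ = z₂) :
    ∃ y ∈ f q, (y ∉ f p₁ ∪ f p₂ ∧ (∃ x ∈ f p₁, H.Adj x y) ∧ (∃ x ∈ f p₂, H.Adj x y)) ∧
      ∀ u ∈ f q, ∀ x ∈ f p₁ ∪ f p₂, H.Adj x u → u = y := by
  obtain ⟨x₁, hx₁, y₁, hy₁, hxy₁⟩ := hf.adj p₁ q h₁
  obtain ⟨x₂, hx₂, y₂, hy₂, hxy₂⟩ := hf.adj p₂ q h₂
  obtain rfl := hq y₁ hy₁ y₂ hy₂ ⟨x₁, hx₁, hxy₁⟩ ⟨x₂, hx₂, hxy₂⟩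
  refine ⟨y₁, hy₁, ⟨?_, ⟨x₁, hx₁, hxy₁⟩, ⟨x₂, hx₂, hxy₂⟩⟩, fun u hu x hx hxu => ?_⟩
  · rintro (h | h)
    exacts [G.ne_of_adj h₁ (hf.eq_of_mem h hy₁), G.ne_of_adj h₂ (hf.eq_of_mem h hy₁)]
  rcases hx with hx | hx
  · exact hq u hu y₁ hy₁ ⟨x, hx, hxu⟩ ⟨x₂, hx₂, hxy₂⟩
  · exact (hq y₁ hy₁ u hu ⟨x₁, hx₁, hxy₁⟩ ⟨x, hx, hxu⟩).symm

theorem exists_three_attachments (hf : IsMinorModel G H f) {p₁ p₂ q₁ q₂ q₃ : V}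
    (hq : [q₁, q₂, q₃].Nodup)
    (hPQ : ∀ p ∈ ({p₁, p₂} : Set V), ∀ q ∈ ({q₁, q₂, q₃} : Set V), G.Adj p q)
    (hsplit : ¬ ∃ q ∈ ({q₁, q₂, q₃} : Set V), ∃ z₁ ∈ f q, ∃ z₂ ∈ f q, z₁ ≠ z₂ ∧
      (∃ x ∈ f p₁, H.Adj x z₁) ∧ (∃ x ∈ f p₂, H.Adj x z₂)) :
    ∃ Y : Finset W, Y.card = 3 ∧
      (∀ y ∈ Y, y ∉ f p₁ ∪ f p₂ ∧ (∃ x ∈ f p₁, H.Adj x y) ∧ (∃ x ∈ f p₂, H.Adj x y)) ∧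
      ∀ q ∈ ({q₁, q₂, q₃} : Set V), ∀ u ∈ f q, ∀ x ∈ f p₁ ∪ f p₂, H.Adj x u → u ∈ Y := by
  classical
  simp only [List.nodup_cons, List.mem_cons, List.not_mem_nil, or_false, not_or] at hq
  obtain ⟨⟨hq₁₂, hq₁₃⟩, hq₂₃, -⟩ := hq
  have hattach := fun q (hq : q ∈ ({q₁, q₂, q₃} : Set V)) =>
    hf.exists_unique_attachment (hPQ p₁ (by simp) q hq) (hPQ p₂ (by simp) q hq)
      fun z₁ hz₁ z₂ hz₂ h₁ h₂ => by_contra fun hne => hsplit ⟨q, hq, z₁, hz₁, z₂, hz₂, hne, h₁, h₂⟩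
  obtain ⟨y₁, hy₁, hy₁P, hy₁u⟩ := hattach q₁ (by simp)
  obtain ⟨y₂, hy₂, hy₂P, hy₂u⟩ := hattach q₂ (by simp)
  obtain ⟨y₃, hy₃, hy₃P, hy₃u⟩ := hattach q₃ (by simp)
  refine ⟨{y₁, y₂, y₃}, Finset.card_eq_three.2 ⟨y₁, y₂, y₃,
    (hf.disjoint _ _ hq₁₂).ne_of_mem hy₁ hy₂, (hf.disjoint _ _ hq₁₃).ne_of_mem hy₁ hy₃,
    (hf.disjoint _ _ hq₂₃).ne_of_mem hy₂ hy₃, rfl⟩, ?_, ?_⟩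
  · simp only [Finset.mem_insert, Finset.mem_singleton]
    rintro y (rfl | rfl | rfl)
    exacts [hy₁P, hy₂P, hy₃P]
  · simp only [Set.mem_insert_iff, Set.mem_singleton_iff]
    rintro q (rfl | rfl | rfl) u hu x hx hxu
    · simp [hy₁u u hu x hx hxu]
    · simp [hy₂u u hu x hx hxu]
    · simp [hy₃u u hu x hx hxu]

theorem exists_jump_or_split [Finite W] (hH : WeaklyFourConnected H)
    (hf : IsMinorModel G H f) (hspan : ∀ x, ∃ a, x ∈ f a) {p₁ p₂ q₁ q₂ q₃ : V} {R : Set V}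
    (hnodup : [p₁, p₂, q₁, q₂, q₃].Nodup) (hPR : ({p₁, p₂} : Set V) ∩ R = ∅)
    (hpart : ({p₁, p₂} : Set V) ∪ {q₁, q₂, q₃} ∪ R = Set.univ) (hR : 2 ≤ R.ncard)
    (hPQ : ∀ p ∈ ({p₁, p₂} : Set V), ∀ q ∈ ({q₁, q₂, q₃} : Set V), G.Adj p q) :
    (∃ p ∈ ({p₁, p₂} : Set V), ∃ r ∈ R, ∃ x ∈ f p, ∃ y ∈ f r, H.Adj x y) ∨
    ∃ q ∈ ({q₁, q₂, q₃} : Set V), ∃ z₁ ∈ f q, ∃ z₂ ∈ f q, z₁ ≠ z₂ ∧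
      (∃ x ∈ f p₁, H.Adj x z₁) ∧ (∃ x ∈ f p₂, H.Adj x z₂) := by
  refine or_iff_not_imp_left.2 fun hjump => by_contra fun hsplit => ?_
  obtain ⟨Y, hY, hYT, hYQ⟩ :=
    hf.exists_three_attachments (List.nodup_cons.1 (List.nodup_cons.1 hnodup).2).2 hPQ hsplit
  set T := f p₁ ∪ f p₂
  have hRT : ∀ r ∈ R, ∀ w ∈ f r, ∀ x ∈ T, ¬ H.Adj x w := by
    rintro r hr w hw x (hx | hx) hxw
    exacts [hjump ⟨p₁, by simp, r, hr, x, hx, w, hw, hxw⟩,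
      hjump ⟨p₂, by simp, r, hr, x, hx, w, hw, hxw⟩]
  have haway : ∀ r ∈ R, ∀ w ∈ f r, insert w (H.neighborSet w) ⊆ Tᶜ := by
    rintro r hr w hw u (rfl | hwu) hu
    · exact hPR.subset ⟨hu.elim (fun h => .inl (hf.eq_of_mem hw h))
        (fun h => .inr (hf.eq_of_mem hw h)), hr⟩
    · exact hRT r hr w hw u hu hwu.symm
  obtain ⟨r₁, hr₁, r₂, hr₂, hr⟩ := (Set.one_lt_ncard_iff_nontrivial_and_finite.1 hR).1
  obtain ⟨w₁, hw₁⟩ := hf.nonempty r₁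
  obtain ⟨w₂, hw₂⟩ := hf.nonempty r₂
  refine hH.false_of_three_attachments
    (hf.disjoint p₁ p₂ fun h => (List.nodup_cons.1 hnodup).1 (by simp [h])) hY hYT ?_
    ((hf.disjoint r₁ r₂ hr).ne_of_mem hw₁ hw₂) (haway r₁ hr₁ w₁ hw₁) (haway r₂ hr₂ w₂ hw₂)
  intro x hx u hxu
  obtain ⟨a, hua⟩ := hspan u
  rcases hpart ▸ Set.mem_univ a with (hap | haQ) | haR
  · exact .inl (hap.elim (fun h => .inl (h ▸ hua)) fun h => .inr (h ▸ hua))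
  · exact .inr (hYQ a haQ u hua x hx hxu)
  · exact absurd hxu (hRT a haR u hua x hx)

end IsMinorModel

theorem separation_fixing_general {V U : Type u} [Fintype U]
    (G1 : SimpleGraph V) (H : SimpleGraph U)
    (hH : WeaklyFourConnected H) (hminor : IsMinorOf G1 H)
    (p1 p2 q1 q2 q3 : V) (R : Set V)
    (hnodup : [p1, p2, q1, q2, q3].Nodup)
    (hPR : ({p1, p2} : Set V) ∩ R = ∅)
    (hpart : ({p1, p2} : Set V) ∪ {q1, q2, q3} ∪ R = Set.univ)
    (hR : 2 ≤ R.ncard)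
    (hPQ : ∀ p ∈ ({p1, p2} : Set V), ∀ q ∈ ({q1, q2, q3} : Set V), G1.Adj p q) :
    (∃ p ∈ ({p1, p2} : Set V), ∃ r ∈ R, IsMinorOf (addE G1 p r) H) ∨
    (∃ q ∈ ({q1, q2, q3} : Set V), ∃ N1 N2 : Set V,
      N1 ∪ N2 = G1.neighborSet q ∧ Disjoint N1 N2 ∧ p1 ∈ N1 ∧ p2 ∈ N2 ∧
      IsMinorOf (splitGraph G1 q N1 N2) H) := by
  obtain ⟨f₀, hf₀⟩ := isMinorOf_iff_exists_isMinorModel.1 hminor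
  have : Nonempty V := ⟨p1⟩
  obtain ⟨f, hf, hspan⟩ := hf₀.exists_spanning hH.1.connected
  rcases hf.exists_jump_or_split hH hspan hnodup hPR hpart hR hPQ with
    ⟨p, hp, r, hr, x, hx, y, hy, hxy⟩ | ⟨q, hq, z₁, hz₁, z₂, hz₂, hz, h₁, h₂⟩
  · exact .inl ⟨p, hp, r, hr, (hf.addE hx hy hxy).isMinorOf⟩
  · have hp₁₂ : p1 ≠ p2 := fun h => (List.nodup_cons.1 hnodup).1 (by simp [h])
    exact .inr ⟨q, hq, hf.exists_split (hPQ p1 (by simp) q hq).symm (hPQ p2 (by simp) q hq).symm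
      hp₁₂ hz₁ hz₂ hz h₁ h₂⟩

/-- the separation-fixing lemma. -/
theorem separation_fixing {V U : Type u} [Fintype V] [Fintype U]
    (G1 : SimpleGraph V) (H : SimpleGraph U)
    (hH : WeaklyFourConnected H) (hminor : IsMinorOf G1 H)
    (p1 p2 q1 q2 q3 : V) (R : Set V)
    (hnodup : [p1, p2, q1, q2, q3].Nodup)
    (hPR : ({p1, p2} : Set V) ∩ R = ∅) (hQR : ({q1, q2, q3} : Set V) ∩ R = ∅)
    (hpart : ({p1, p2} : Set V) ∪ {q1, q2, q3} ∪ R = Set.univ)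
    (hR : 2 ≤ R.ncard)
    (hPQ : ∀ p ∈ ({p1, p2} : Set V), ∀ q ∈ ({q1, q2, q3} : Set V), G1.Adj p q)
    (hQ : ∀ q ∈ ({q1, q2, q3} : Set V), ∀ q' ∈ ({q1, q2, q3} : Set V), ¬ G1.Adj q q')
    (hsep : Separation G1 (({p1, p2} : Set V) ∪ {q1, q2, q3}) (({q1, q2, q3} : Set V) ∪ R)) :
    (∃ p ∈ ({p1, p2} : Set V), ∃ r ∈ R, IsMinorOf (addE G1 p r) H) ∨
    (∃ q ∈ ({q1, q2, q3} : Set V), ∃ N1 N2 : Set V,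
      N1 ∪ N2 = G1.neighborSet q ∧ Disjoint N1 N2 ∧ p1 ∈ N1 ∧ p2 ∈ N2 ∧
      IsMinorOf (splitGraph G1 q N1 N2) H) :=
  separation_fixing_general G1 H hH hminor p1 p2 q1 q2 q3 R hnodup hPR hpart hR hPQ
end
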